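/- Let the additive group ℝⁿ act by isometries on a metric space X, and assume that for every x ∈ X the map a ↦ a·x from ℝⁿ to X is continuous. Then the function a ↦ |a| assigning to each a ∈ ℝⁿ its stable translation length is a seminorm on ℝⁿ (it is subadditive and satisfies |λ·a| = |λ|·|a| for all λ ∈ ℝ), and in particular the set N = {a ∈ ℝⁿ : |a| = 0} of neutral elements is an ℝ-linear subspace of ℝⁿ. -/

import Mathlib

/-!
The displacement `m ↦ dist ((m • a) +ᵥ x) x` is subadditive, so by Fekete's lemma
`dist ((m • a) +ᵥ x) x / m` converges; moving the base point changes the displacement by at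
most `2 * dist x y`, so the limit does not depend on `x`. Because the action is isometric and the
group is commutative, the limit is subadditive in `a`, invariant under `a ↦ -a` and satisfies
`|k • a| = k * |a|`, which gives homogeneity for rational scalars. The bound
`|a| ≤ dist (a +ᵥ x) x` together with continuity of the orbit map makes `a ↦ |a|` continuous,
and density of `ℚ` in `ℝ` extends homogeneity to all real scalars. The neutral elements are
then the kernel of this seminorm.
-/

open Filter Topology

theorem AddGroupSeminorm.continuous_of_continuousAt_zero {G : Type*} [AddGroup G]
    [TopologicalSpace G] [IsTopologicalAddGroup G] (p : AddGroupSeminorm G)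
    (hp : ContinuousAt p 0) : Continuous p := by
  refine continuous_iff_continuousAt.2 fun b => tendsto_iff_dist_tendsto_zero.2 ?_
  have hp0 : Tendsto p (𝓝 0) (𝓝 0) := by simpa only [ContinuousAt, map_zero] using hp
  have hsub : Tendsto (fun a => p (a - b)) (𝓝 b) (𝓝 0) :=
    hp0.comp ((continuous_sub_right b).tendsto' b 0 (sub_self b))
  exact squeeze_zero (fun _ => dist_nonneg) (fun a => abs_sub_map_le_sub p a b) hsub

section IsometricAction

variable {G X : Type*} [PseudoMetricSpace X]

theorem dist_vadd_le_dist_vadd_add [VAdd G X] [IsIsometricVAdd G X] (a : G) (x y : X) :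
    dist (a +ᵥ x) x ≤ dist (a +ᵥ y) y + 2 * dist x y := by
  calc dist (a +ᵥ x) x ≤ dist (a +ᵥ x) (a +ᵥ y) + dist (a +ᵥ y) y + dist y x :=
        dist_triangle4 _ _ _ _
    _ = dist (a +ᵥ y) y + 2 * dist x y := by rw [dist_vadd, dist_comm y]; ring

theorem dist_add_vadd_le [AddMonoid G] [AddAction G X] [IsIsometricVAdd G X] (a b : G) (x : X) :
    dist ((a + b) +ᵥ x) x ≤ dist (a +ᵥ x) x + dist (b +ᵥ x) x := by
  calc dist ((a + b) +ᵥ x) x ≤ dist (a +ᵥ (b +ᵥ x)) (a +ᵥ x) + dist (a +ᵥ x) x := by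
        rw [add_vadd]; exact dist_triangle _ _ _
    _ = dist (a +ᵥ x) x + dist (b +ᵥ x) x := by rw [dist_vadd, add_comm]

theorem dist_neg_vadd [AddGroup G] [AddAction G X] [IsIsometricVAdd G X] (a : G) (x : X) :
    dist (-a +ᵥ x) x = dist (a +ᵥ x) x := by
  rw [← dist_vadd a, vadd_neg_vadd, dist_comm]

section AddMonoid

variable [AddMonoid G] [AddAction G X]

theorem bddBelow_range_dist_nsmul_vadd_div (a : G) (x : X) :
    BddBelow (Set.range fun m : ℕ => dist ((m • a) +ᵥ x) x / m) :=
  ⟨0, by rintro _ ⟨m, rfl⟩; positivity⟩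

variable [IsIsometricVAdd G X]

theorem subadditive_dist_nsmul_vadd (a : G) (x : X) :
    Subadditive fun m : ℕ => dist ((m • a) +ᵥ x) x := fun m k => by
  simpa only [add_nsmul] using dist_add_vadd_le (m • a) (k • a) x

noncomputable def translationLength (a : G) (x : X) : ℝ :=
  (subadditive_dist_nsmul_vadd a x).lim

theorem tendsto_translationLength (a : G) (x : X) :
    Tendsto (fun m : ℕ => dist ((m • a) +ᵥ x) x / m) atTop (𝓝 (translationLength a x)) :=
  (subadditive_dist_nsmul_vadd a x).tendsto_lim (bddBelow_range_dist_nsmul_vadd_div a x)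

theorem translationLength_nonneg (a : G) (x : X) : 0 ≤ translationLength a x :=
  ge_of_tendsto' (tendsto_translationLength a x) fun _ => by positivity

theorem translationLength_le_dist (a : G) (x : X) : translationLength a x ≤ dist (a +ᵥ x) x :=
  ((subadditive_dist_nsmul_vadd a x).lim_le_div
    (bddBelow_range_dist_nsmul_vadd_div a x) one_ne_zero).trans_eq (by simp)

theorem translationLength_eq_translationLength (a : G) (x y : X) :
    translationLength a x = translationLength a y := by
  suffices h : ∀ x y : X, translationLength a x ≤ translationLength a y from
    (h x y).antisymm (h y x)
  intro x y
  have hbound : Tendsto (fun m : ℕ => dist ((m • a) +ᵥ y) y / m + 2 * dist x y / m) atTop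
      (𝓝 (translationLength a y)) := by
    simpa using (tendsto_translationLength a y).add
      (tendsto_const_div_atTop_nhds_zero_nat (2 * dist x y))
  refine le_of_tendsto_of_tendsto' (tendsto_translationLength a x) hbound fun m => ?_
  rw [← add_div]
  gcongr
  exact dist_vadd_le_dist_vadd_add _ x y

theorem translationLength_zero (x : X) : translationLength (0 : G) x = 0 :=
  tendsto_nhds_unique (tendsto_translationLength 0 x) (by simp)

theorem translationLength_nsmul (k : ℕ) (a : G) (x : X) :
    translationLength (k • a) x = k * translationLength a x := by
  rcases k.eq_zero_or_pos with rfl | hk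
  · simp [translationLength_zero]
  have hsubseq : Tendsto (fun m : ℕ => dist (((m * k : ℕ) • a) +ᵥ x) x / (m * k : ℕ) * k)
      atTop (𝓝 (translationLength a x * k)) :=
    ((tendsto_translationLength a x).comp (tendsto_id.atTop_mul_const' hk)).mul_const _
  refine (tendsto_nhds_unique (tendsto_translationLength (k • a) x) (hsubseq.congr' ?_)).trans
    (mul_comm _ _)
  filter_upwards [eventually_ne_atTop 0] with m hm
  rw [mul_nsmul', Nat.cast_mul]
  field_simp

end AddMonoid

theorem translationLength_add_le [AddCommMonoid G] [AddAction G X] [IsIsometricVAdd G X]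
    (a b : G) (x : X) :
    translationLength (a + b) x ≤ translationLength a x + translationLength b x :=
  le_of_tendsto_of_tendsto' (tendsto_translationLength (a + b) x)
    ((tendsto_translationLength a x).add (tendsto_translationLength b x)) fun m => by
      rw [← add_div, nsmul_add]
      gcongr
      exact dist_add_vadd_le _ _ x

theorem translationLength_neg [AddGroup G] [AddAction G X] [IsIsometricVAdd G X]
    (a : G) (x : X) : translationLength (-a) x = translationLength a x := by
  refine tendsto_nhds_unique (tendsto_translationLength (-a) x) ?_
  simpa only [neg_nsmul, dist_neg_vadd] using tendsto_translationLength a x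

section AddCommGroup

variable [AddCommGroup G] [AddAction G X] [IsIsometricVAdd G X]

noncomputable def translationLengthAddGroupSeminorm (x : X) : AddGroupSeminorm G where
  toFun a := translationLength a x
  map_zero' := translationLength_zero x
  add_le' a b := translationLength_add_le a b x
  neg' a := translationLength_neg a x

theorem continuous_translationLength [TopologicalSpace G] [IsTopologicalAddGroup G] {x : X}
    (hx : ContinuousAt (· +ᵥ x : G → X) 0) :
    Continuous fun a : G => translationLength a x := by
  refine (translationLengthAddGroupSeminorm x).continuous_of_continuousAt_zero ?_
  have hdist : Tendsto (fun a : G => dist (a +ᵥ x) x) (𝓝 0) (𝓝 0) := by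
    simpa using hx.dist (continuousAt_const (y := x))
  rw [ContinuousAt, map_zero]
  exact squeeze_zero (translationLength_nonneg · x) (translationLength_le_dist · x) hdist

theorem translationLength_zsmul (z : ℤ) (a : G) (x : X) :
    translationLength (z • a) x = |(z : ℝ)| * translationLength a x := by
  obtain ⟨k, rfl | rfl⟩ := z.eq_nat_or_neg
  · simp [translationLength_nsmul]
  · simp [neg_smul, translationLength_neg, translationLength_nsmul]

theorem translationLength_ratCast_smul [Module ℝ G] (q : ℚ) (a : G) (x : X) :
    translationLength ((q : ℝ) • a) x = |(q : ℝ)| * translationLength a x := by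
  have hclear : q.den • ((q : ℝ) • a) = q.num • a := by
    rw [← Nat.cast_smul_eq_nsmul ℝ, smul_smul, ← Int.cast_smul_eq_zsmul ℝ]
    congr 1
    exact_mod_cast Rat.den_mul_eq_num q
  have h := congrArg (translationLength · x) hclear
  simp only [translationLength_nsmul, translationLength_zsmul] at h
  have habs : |(q : ℝ)| = |(q.num : ℝ)| / q.den := by rw [Rat.cast_def, abs_div, Nat.abs_cast]
  rw [habs, div_mul_eq_mul_div, ← h, mul_div_cancel_left₀ _ (Nat.cast_ne_zero.2 q.den_nz)]

theorem translationLength_smul [Module ℝ G] [TopologicalSpace G] [IsTopologicalAddGroup G]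
    [ContinuousSMul ℝ G] {x : X} (hx : ContinuousAt (· +ᵥ x : G → X) 0) (c : ℝ) (a : G) :
    translationLength (c • a) x = |c| * translationLength a x := by
  have hcont : Continuous fun c : ℝ => translationLength (c • a) x :=
    (continuous_translationLength hx).comp (continuous_id.smul continuous_const)
  have hrat := funext fun q : ℚ => translationLength_ratCast_smul q a x
  exact congrFun (Rat.denseRange_cast.equalizer hcont (continuous_abs.mul continuous_const) hrat) c

noncomputable def translationLengthSeminorm [Module ℝ G] [TopologicalSpace G]
    [IsTopologicalAddGroup G] [ContinuousSMul ℝ G] (x : X)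
    (hx : ContinuousAt (· +ᵥ x : G → X) 0) : Seminorm ℝ G where
  __ := translationLengthAddGroupSeminorm x
  smul' c a := translationLength_smul hx c a

end AddCommGroup

end IsometricAction

def Seminorm.ker {𝕜 E : Type*} [SeminormedRing 𝕜] [AddCommGroup E] [Module 𝕜 E]
    (p : Seminorm 𝕜 E) : Submodule 𝕜 E where
  carrier := {a | p a = 0}
  add_mem' {a b} ha hb := le_antisymm ((map_add_le_add p a b).trans_eq (by simp_all))
    (apply_nonneg p _)
  zero_mem' := map_zero p
  smul_mem' c a ha := by simp_all [map_smul_eq_mul]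

/-- If the additive group `ℝⁿ` acts by isometries on a metric space `X`,
continuously in the group variable, then the stable translation length
`a ↦ |a|` is a seminorm on `ℝⁿ`; in particular the set of neutral elements
(those with `|a| = 0`) is an `ℝ`-linear subspace of `ℝⁿ`. -/
theorem stable_translation_length_seminorm
    {n : ℕ} {X : Type*} [MetricSpace X]
    [AddAction (EuclideanSpace ℝ (Fin n)) X]
    (hiso : ∀ a : EuclideanSpace ℝ (Fin n), Isometry (fun x : X => a +ᵥ x))
    (hcont : ∀ x : X, Continuous (fun a : EuclideanSpace ℝ (Fin n) => a +ᵥ x)) :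
    ∃ p : Seminorm ℝ (EuclideanSpace ℝ (Fin n)),
      (∀ (a : EuclideanSpace ℝ (Fin n)) (x : X),
          Tendsto (fun m : ℕ => dist ((m • a) +ᵥ x) x / m) atTop (𝓝 (p a))) ∧
        ∃ N : Submodule ℝ (EuclideanSpace ℝ (Fin n)),
          (N : Set (EuclideanSpace ℝ (Fin n))) =
            {a : EuclideanSpace ℝ (Fin n) | ∀ x : X,
              Tendsto (fun m : ℕ => dist ((m • a) +ᵥ x) x / m) atTop (𝓝 0)} := by
  rcases isEmpty_or_nonempty X with _ | ⟨⟨x₀⟩⟩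
  · exact ⟨0, fun _ x => isEmptyElim x, ⊤, by simp [IsEmpty.forall_iff]⟩
  have : IsIsometricVAdd (EuclideanSpace ℝ (Fin n)) X := ⟨hiso⟩
  let p := translationLengthSeminorm x₀ (hcont x₀).continuousAt
  have hp : ∀ a x, Tendsto (fun m : ℕ => dist ((m • a) +ᵥ x) x / m) atTop (𝓝 (p a)) :=
    fun a x => translationLength_eq_translationLength a x x₀ ▸ tendsto_translationLength a x
  exact ⟨p, hp, p.ker, Set.ext fun a => ⟨fun (ha : p a = 0) x => ha ▸ hp a x,
    fun ha => tendsto_nhds_unique (hp a x₀) (ha x₀)⟩⟩
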